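/- arXiv:0808.1016 — 2 statements merged into one kernel-verified Lean document; each statement's English description precedes it below -/
import Mathlib

section
/- Suppose Med_c > 0 and O ≤ 1 - 2·F_c(0). Then the unique real β* with F_c(β*) = (1 - O)/2 satisfies β* ≥ 0, and β* is the unique median of the mixture CDF F. -/
open Filter Topology Function

/-!
For `0 ≤ π < 1` the mixture CDF is strictly increasing: the continuous part is, and the atom at
`0` only adds an upward jump. A strictly increasing CDF has at most one median, namely a point
where it equals `1/2`. The odds condition says exactly `F_c(0) ≤ (1 - O)/2 = F_c(β*)`, i.e.
`β* ≥ 0`, and then `F(β*) = π + (1 - π)(1 - O)/2 = 1/2`.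
-/

/-- The mixture CDF `F(β) = π·1_{β ≥ 0} + (1-π)·F_c(β)`. -/
noncomputable def mixCDF (p : ℝ) (Fc : ℝ → ℝ) (β : ℝ) : ℝ :=
  (if 0 ≤ β then p else 0) + (1 - p) * Fc β

/-- `M` is a median of `F`: `F(M) ≥ 1/2` and the left limit `F(M⁻) ≤ 1/2`. -/
def IsMedian (F : ℝ → ℝ) (M : ℝ) : Prop :=
  1 / 2 ≤ F M ∧ Function.leftLim F M ≤ 1 / 2

theorem isMedian_of_apply_eq_half {F : ℝ → ℝ} (hF : Monotone F) {a : ℝ} (ha : F a = 1 / 2) :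
    IsMedian F a :=
  ⟨ha.ge, ha ▸ hF.leftLim_le le_rfl⟩

theorem IsMedian.eq_of_strictMono {F : ℝ → ℝ} (hF : StrictMono F) {a M : ℝ} (ha : F a = 1 / 2)
    (hM : IsMedian F M) : M = a := by
  rcases lt_trichotomy M a with hMa | hMa | haM
  · linarith [hF hMa, hM.1]
  · exact hMa
  · obtain ⟨b, hab, hbM⟩ := exists_between haM
    linarith [hF hab, hF.monotone.le_leftLim hbM, hM.2]

theorem mixCDF_strictMono {p : ℝ} (hp0 : 0 ≤ p) (hp1 : p < 1) {Fc : ℝ → ℝ}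
    (hFc : StrictMono Fc) : StrictMono (mixCDF p Fc) := by
  intro x y hxy
  have hatom : (if 0 ≤ x then p else 0) ≤ if 0 ≤ y then p else 0 := by
    split_ifs <;> linarith
  have hcont : (1 - p) * Fc x < (1 - p) * Fc y :=
    mul_lt_mul_of_pos_left (hFc hxy) (sub_pos.2 hp1)
  simp only [mixCDF]
  linarith

theorem mixCDF_eq_half {p : ℝ} (hp1 : p < 1) {Fc : ℝ → ℝ} {β : ℝ} (hβ : 0 ≤ β)
    (hFβ : Fc β = (1 - p / (1 - p)) / 2) : mixCDF p Fc β = 1 / 2 := by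
  have hp : 1 - p ≠ 0 := (sub_pos.2 hp1).ne'
  rw [mixCDF, if_pos hβ, hFβ]
  field_simp
  ring

theorem pos_case_small_odds_unique_median_general (p : ℝ) (hp0 : 0 ≤ p) (hp1 : p < 1)
    (Fc : ℝ → ℝ) (hFc_mono : StrictMono Fc)
    (hO : p / (1 - p) ≤ 1 - 2 * Fc 0)
    (βs : ℝ) (hβs : Fc βs = (1 - p / (1 - p)) / 2) :
    0 ≤ βs ∧ IsMedian (mixCDF p Fc) βs ∧
      ∀ M : ℝ, IsMedian (mixCDF p Fc) M → M = βs := by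
  have hF := mixCDF_strictMono hp0 hp1 hFc_mono
  have hβs_nonneg : 0 ≤ βs := hFc_mono.le_iff_le.1 (by rw [hβs]; linarith)
  have hhalf := mixCDF_eq_half hp1 hβs_nonneg hβs
  exact ⟨hβs_nonneg, isMedian_of_apply_eq_half hF.monotone hhalf,
    fun M hM => hM.eq_of_strictMono hF hhalf⟩

theorem pos_case_small_odds_unique_median (p : ℝ) (hp0 : 0 ≤ p) (hp1 : p < 1)
    (Fc : ℝ → ℝ) (hFc_cont : Continuous Fc) (hFc_mono : StrictMono Fc)
    (hFc_bot : Tendsto Fc atBot (𝓝 0)) (hFc_top : Tendsto Fc atTop (𝓝 1))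
    (medc : ℝ) (hmedc : Fc medc = 1 / 2) (hmedc_pos : 0 < medc)
    (hO : p / (1 - p) ≤ 1 - 2 * Fc 0)
    (βs : ℝ) (hβs : Fc βs = (1 - p / (1 - p)) / 2) :
    0 ≤ βs ∧ IsMedian (mixCDF p Fc) βs ∧
      ∀ M : ℝ, IsMedian (mixCDF p Fc) M → M = βs :=
  pos_case_small_odds_unique_median_general p hp0 hp1 Fc hFc_mono hO βs hβs
end

section
/- Suppose Med_c > 0 and O > 1 - 2·F_c(0). Then F(0) > 1/2 and F(0⁻) ≤ 1/2, so M = 0 is the unique median of the mixture CDF F. -/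
/-!
A mixture of an atom at `0` with a strictly increasing CDF is strictly increasing, and a strictly
increasing function has at most one median. At `0` the atom makes `F` jump from
`(1 - π) F_c(0)` to `π + (1 - π) F_c(0)`; since `F_c(0) < F_c(Med_c) = 1/2`, the left value is
below `1/2`, and the odds condition is exactly the statement that the right value exceeds `1/2`.
-/

open Filter Topology Function

theorem IsMedian.eq_of_strictMono_s4 {F : ℝ → ℝ} (hF : StrictMono F) {x y : ℝ}
    (hx : IsMedian F x) (hy : IsMedian F y) : x = y := by
  have below : ∀ {a b : ℝ}, IsMedian F a → IsMedian F b → ¬ a < b := by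
    intro a b ha hb hab
    have hmid : F a < F ((a + b) / 2) := hF (by linarith)
    have hlim : F ((a + b) / 2) ≤ leftLim F b := hF.monotone.le_leftLim (by linarith)
    linarith [ha.1, hb.2]
  exact le_antisymm (not_lt.mp (below hy hx)) (not_lt.mp (below hx hy))

section mixCDF

variable {p : ℝ} {Fc : ℝ → ℝ}

theorem mixCDF_of_neg {β : ℝ} (hβ : β < 0) : mixCDF p Fc β = (1 - p) * Fc β := by
  simp [mixCDF, not_le.mpr hβ]

theorem mixCDF_of_nonneg {β : ℝ} (hβ : 0 ≤ β) : mixCDF p Fc β = p + (1 - p) * Fc β := by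
  simp [mixCDF, hβ]

theorem strictMono_mixCDF (hp0 : 0 ≤ p) (hp1 : p < 1) (hFc : StrictMono Fc) :
    StrictMono (mixCDF p Fc) := by
  have hatom : Monotone fun β : ℝ => if 0 ≤ β then p else 0 := by
    intro a b hab
    dsimp only
    split_ifs <;> linarith
  exact hatom.add_strictMono (hFc.const_mul (by linarith))

theorem leftLim_mixCDF_zero (hFc : ContinuousAt Fc 0) :
    leftLim (mixCDF p Fc) 0 = (1 - p) * Fc 0 := by
  apply leftLim_eq_of_tendsto
  have hcont : Tendsto (fun β => (1 - p) * Fc β) (𝓝[<] 0) (𝓝 ((1 - p) * Fc 0)) :=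
    (tendsto_const_nhds.mul hFc).mono_left nhdsWithin_le_nhds
  refine hcont.congr' ?_
  filter_upwards [self_mem_nhdsWithin] with β hβ
  exact (mixCDF_of_neg hβ).symm

end mixCDF

theorem pos_case_large_odds_zero_is_unique_median_general (p : ℝ) (hp1 : p < 1)
    (Fc : ℝ → ℝ) (hFc_cont : Continuous Fc) (hFc_mono : StrictMono Fc)
    (medc : ℝ) (hmedc : Fc medc = 1 / 2) (hmedc_pos : 0 < medc)
    (hO : 1 - 2 * Fc 0 < p / (1 - p)) :
    1 / 2 < mixCDF p Fc 0 ∧ Function.leftLim (mixCDF p Fc) 0 ≤ 1 / 2 ∧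
      IsMedian (mixCDF p Fc) 0 ∧
      ∀ M : ℝ, IsMedian (mixCDF p Fc) M → M = 0 := by
  have hq : 0 < 1 - p := by linarith
  have hFc0 : Fc 0 < 1 / 2 := hmedc ▸ hFc_mono hmedc_pos
  have hodds : (1 - 2 * Fc 0) * (1 - p) < p := (lt_div_iff₀ hq).mp hO
  have hp : 0 < p := lt_trans (by nlinarith) hodds
  have hF0 : 1 / 2 < mixCDF p Fc 0 := by
    rw [mixCDF_of_nonneg le_rfl]
    linarith
  have hleft : leftLim (mixCDF p Fc) 0 ≤ 1 / 2 := by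
    rw [leftLim_mixCDF_zero hFc_cont.continuousAt]
    nlinarith
  have hmed : IsMedian (mixCDF p Fc) 0 := ⟨hF0.le, hleft⟩
  exact ⟨hF0, hleft, hmed, fun M hM =>
    hM.eq_of_strictMono_s4 (strictMono_mixCDF hp.le hp1 hFc_mono) hmed⟩

theorem pos_case_large_odds_zero_is_unique_median (p : ℝ) (hp0 : 0 ≤ p) (hp1 : p < 1)
    (Fc : ℝ → ℝ) (hFc_cont : Continuous Fc) (hFc_mono : StrictMono Fc)
    (hFc_bot : Tendsto Fc atBot (𝓝 0)) (hFc_top : Tendsto Fc atTop (𝓝 1))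
    (medc : ℝ) (hmedc : Fc medc = 1 / 2) (hmedc_pos : 0 < medc)
    (hO : 1 - 2 * Fc 0 < p / (1 - p)) :
    1 / 2 < mixCDF p Fc 0 ∧ Function.leftLim (mixCDF p Fc) 0 ≤ 1 / 2 ∧
      IsMedian (mixCDF p Fc) 0 ∧
      ∀ M : ℝ, IsMedian (mixCDF p Fc) M → M = 0 :=
  pos_case_large_odds_zero_is_unique_median_general p hp1 Fc hFc_cont hFc_mono medc hmedc hmedc_pos
    hO
end
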